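/- If f₁ and f₂ are long-tailed functions on [0,∞) and ∫₀^∞ f₂(y) dy = ∞, then f₁(x) = o(f₁⊗f₂(x)) as x → ∞. -/

import Mathlib

open Filter MeasureTheory Asymptotics

/-- The convolution `u ⊗ v (x) = ∫₀ˣ u(x-y) v(y) dy`. -/
noncomputable def conv (u v : ℝ → ℝ) (x : ℝ) : ℝ := ∫ y in (0:ℝ)..x, u (x - y) * v y

/-- `f` is long-tailed: measurable, locally bounded, nonnegative, eventually positive,
and `f(x - t) ∼ f(x)` as `x → ∞` for each fixed `t`. -/
structure LongTailed (f : ℝ → ℝ) : Prop where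
  meas : Measurable f
  nonneg : ∀ x, 0 ≤ f x
  locBdd : ∀ r : ℝ, ∃ C : ℝ, ∀ x ∈ Set.Icc (0:ℝ) r, f x ≤ C
  evPos : ∀ᶠ x in atTop, 0 < f x
  tail : ∀ t : ℝ, Tendsto (fun x => f (x - t) / f x) atTop (nhds 1)

/-!
Fix `T ≥ 0`. Since `f₁(x - y) / f₁(x) → 1` for every `y`, Fatou's lemma gives
`liminf (∫₀ᵀ f₁(x - y) f₂(y) dy) / f₁(x) ≥ ∫₀ᵀ f₂`, so eventually
`f₁ ⊗ f₂ (x) ≥ ∫₀ᵀ f₁(x - y) f₂(y) dy ≥ c f₁(x)` for any `c < ∫₀ᵀ f₂`.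
As `∫₀ᵀ f₂ → ∞`, the constant `c` can be taken arbitrarily large.
-/

open scoped ENNReal Topology

theorem MeasureTheory.eventually_lt_lintegral_of_tendsto {α ι : Type*} [MeasurableSpace α]
    {μ : Measure α} {l : Filter ι} [l.IsCountablyGenerated] {F : ι → α → ℝ≥0∞}
    {g : α → ℝ≥0∞} (hF : ∀ i, AEMeasurable (F i) μ)
    (hlim : ∀ᵐ a ∂μ, Tendsto (fun i => F i a) l (𝓝 (g a))) {c : ℝ≥0∞}
    (hc : c < ∫⁻ a, g a ∂μ) :
    ∀ᶠ i in l, c < ∫⁻ a, F i a ∂μ := by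
  rcases l.eq_or_neBot with rfl | _
  · exact eventually_bot
  have hg : ∫⁻ a, g a ∂μ = ∫⁻ a, liminf (fun i => F i a) l ∂μ :=
    lintegral_congr_ae (hlim.mono fun a ha => ha.liminf_eq.symm)
  exact eventually_lt_of_lt_liminf ((hg ▸ hc).trans_le (lintegral_liminf_le' hF))

namespace LongTailed

variable {f g : ℝ → ℝ}

theorem integrableOn_Icc (hf : LongTailed f) (r : ℝ) : IntegrableOn f (Set.Icc 0 r) := by
  obtain ⟨C, hC⟩ := hf.locBdd r
  refine Measure.integrableOn_of_bounded (M := C) measure_Icc_lt_top.ne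
    hf.meas.aestronglyMeasurable ?_
  filter_upwards [ae_restrict_mem measurableSet_Icc] with y hy
  rw [Real.norm_of_nonneg (hf.nonneg y)]
  exact hC y hy

theorem integrableOn_mul_sub (hf : LongTailed f) (hg : LongTailed g) (x : ℝ) :
    IntegrableOn (fun y => f (x - y) * g y) (Set.Icc 0 x) := by
  obtain ⟨C, hC⟩ := hf.locBdd x
  refine (hg.integrableOn_Icc x).bdd_mul (c := C)
    (hf.meas.comp (measurable_const.sub measurable_id)).aestronglyMeasurable ?_
  filter_upwards [ae_restrict_mem measurableSet_Icc] with y hy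
  rw [Real.norm_of_nonneg (hf.nonneg _)]
  exact hC _ ⟨sub_nonneg.2 hy.2, sub_le_self x hy.1⟩

theorem integral_mul_sub_le_conv (hf : LongTailed f) (hg : LongTailed g) {T x : ℝ}
    (hT : 0 ≤ T) (hTx : T ≤ x) :
    ∫ y in (0:ℝ)..T, f (x - y) * g y ≤ conv f g x := by
  refine intervalIntegral.integral_mono_interval le_rfl hT hTx
    (Eventually.of_forall fun y => mul_nonneg (hf.nonneg _) (hg.nonneg y)) ?_
  exact (intervalIntegrable_iff_integrableOn_Icc_of_le (hT.trans hTx)).2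
    (hf.integrableOn_mul_sub hg x)

theorem eventually_mul_lt_integral_mul_sub (hf : LongTailed f) (hg : LongTailed g)
    {T c : ℝ} (hT : 0 ≤ T) (hc₀ : 0 ≤ c) (hc : c < ∫ y in (0:ℝ)..T, g y) :
    ∀ᶠ x in atTop, c * f x < ∫ y in (0:ℝ)..T, f (x - y) * g y := by
  set μ := volume.restrict (Set.Ioc (0:ℝ) T)
  have hIoc : Set.Ioc 0 T ⊆ Set.Icc 0 T := Set.Ioc_subset_Icc_self
  have hlim : ∀ y, Tendsto (fun x => ENNReal.ofReal (f (x - y) * g y / f x)) atTop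
      (𝓝 (ENNReal.ofReal (g y))) := by
    intro y
    refine (ENNReal.continuous_ofReal.tendsto _).comp ?_
    simpa only [div_mul_eq_mul_div, one_mul] using (hf.tail y).mul_const (g y)
  have hg_lintegral :
      ∫⁻ y, ENNReal.ofReal (g y) ∂μ = ENNReal.ofReal (∫ y in (0:ℝ)..T, g y) := by
    rw [intervalIntegral.integral_of_le hT, ofReal_integral_eq_lintegral_ofReal
      ((hg.integrableOn_Icc T).mono_set hIoc) (Eventually.of_forall hg.nonneg)]
  have hfatou := eventually_lt_lintegral_of_tendsto (μ := μ) (c := ENNReal.ofReal c)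
    (F := fun x y => ENNReal.ofReal (f (x - y) * g y / f x))
    (fun x => ((((hf.meas.comp (measurable_const.sub measurable_id)).mul hg.meas).div_const
      (f x)).ennreal_ofReal).aemeasurable) (Eventually.of_forall hlim)
    (hg_lintegral ▸ (ENNReal.ofReal_lt_ofReal_iff_of_nonneg hc₀).2 hc)
  filter_upwards [hfatou, hf.evPos, eventually_ge_atTop T] with x hx hfx hTx
  have hint : Integrable (fun y => f (x - y) * g y / f x) μ :=
    ((hf.integrableOn_mul_sub hg x).mono_set
      (hIoc.trans (Set.Icc_subset_Icc_right hTx))).div_const _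
  rwa [← ofReal_integral_eq_lintegral_ofReal hint (Eventually.of_forall fun y =>
    div_nonneg (mul_nonneg (hf.nonneg _) (hg.nonneg y)) (hf.nonneg x)),
    ENNReal.ofReal_lt_ofReal_iff_of_nonneg hc₀, integral_div,
    ← intervalIntegral.integral_of_le hT, lt_div_iff₀ hfx] at hx

end LongTailed

/-- If `f₁, f₂` are long-tailed and `∫₀^∞ f₂ = ∞`, then `f₁(x) = o(f₁ ⊗ f₂ (x))`. -/
theorem isLittleO_conv (f₁ f₂ : ℝ → ℝ)
    (h1 : LongTailed f₁) (h2 : LongTailed f₂)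
    (hdiv : Tendsto (fun x => ∫ y in (0:ℝ)..x, f₂ y) atTop atTop) :
    (fun x => f₁ x) =o[atTop] (fun x => conv f₁ f₂ x) := by
  refine isLittleO_iff.2 fun ε hε => ?_
  obtain ⟨T, hT_large, hT⟩ :=
    ((hdiv.eventually_gt_atTop ε⁻¹).and (eventually_ge_atTop 0)).exists
  filter_upwards [h1.eventually_mul_lt_integral_mul_sub h2 hT (inv_nonneg.2 hε.le) hT_large,
    eventually_ge_atTop T] with x hx hTx
  have hconv : ε⁻¹ * f₁ x < conv f₁ f₂ x :=
    hx.trans_le (h1.integral_mul_sub_le_conv h2 hT hTx)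
  have hf₁ := h1.nonneg x
  rw [Real.norm_of_nonneg hf₁,
    Real.norm_of_nonneg ((mul_nonneg (inv_nonneg.2 hε.le) hf₁).trans hconv.le)]
  rw [inv_mul_eq_div, div_lt_iff₀' hε] at hconv
  exact hconv.le
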